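/- Let n ≥ 1 and let X₁, X₂ be skew-Hermitian complex n×n matrices (X₁ᴴ = −X₁ and X₂ᴴ = −X₂). Let γ : [0,1] → ℂ \ {1,−1} be a continuously differentiable path, and let γ̄ be its complex-conjugate path γ̄(s) = conj(γ(s)). If Y and Z are the parallel transports of the connection A(z) dz, A(z) = X₁/(z−1) + X₂/(z+1), along γ and γ̄ respectively (with Y(0) = Z(0) = 1), then Z(s) = (Y(s)ᴴ)⁻¹ for all s ∈ [0,1]. (This expresses the paper's reality condition \overline{A(z)} = −A(\overline{z}) at the level of holonomies: the holonomy of a σ-invariant connection along the conjugated contour is the inverse conjugate-transpose of the original holonomy, which is what makes the image of the map ξ land in the hyperbolic moduli space.) -/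

import Mathlib

/-! If `Y' = M Y` with `M = γ' • A(γ)`, then the reality condition `A(z̄)ᴴ = -A(z)`, which is
where skew-Hermitianity of the residues enters, gives `(Zᴴ)' = -Zᴴ M`. Hence `Zᴴ Y` has zero
derivative on `[0,1]`, so it stays equal to its initial value `1`. -/

open Matrix

attribute [local instance] Matrix.normedAddCommGroup Matrix.normedSpace

/-- `Y` is the parallel transport along the path `γ` (with derivative `γ'`) of the
connection `A(z) dz`, `A(z) = (z-1)⁻¹ • X₁ + (z+1)⁻¹ • X₂`: it solves
`Y' = γ' • A(γ) * Y` on `[0,1]` with `Y 0 = 1`. -/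
def IsParallelTransport {n : ℕ} (X₁ X₂ : Matrix (Fin n) (Fin n) ℂ)
    (γ γ' : ℝ → ℂ) (Y : ℝ → Matrix (Fin n) (Fin n) ℂ) : Prop :=
  Y 0 = 1 ∧ ∀ s ∈ Set.Icc (0 : ℝ) 1,
    HasDerivWithinAt Y
      (γ' s • (((γ s - 1)⁻¹ • X₁ + (γ s + 1)⁻¹ • X₂) * Y s))
      (Set.Icc (0 : ℝ) 1) s

section MatrixCalculus

variable {l m n 𝕜 : Type*} [NontriviallyNormedField 𝕜] {s : Set 𝕜} {x : 𝕜}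

theorem HasDerivWithinAt.matrix_apply {E : Type*} [Fintype m] [NormedAddCommGroup E]
    [NormedSpace 𝕜 E] {f : 𝕜 → Matrix l m E} {f' : Matrix l m E}
    (hf : HasDerivWithinAt f f' s x) (i : l) (j : m) :
    HasDerivWithinAt (fun t => f t i j) (f' i j) s x :=
  hasDerivWithinAt_pi.1 (hasDerivWithinAt_pi.1 hf i) j

theorem HasDerivWithinAt.matrix_mul {𝔸 : Type*} [Fintype m] [Fintype n] [NormedCommRing 𝔸]
    [NormedAlgebra 𝕜 𝔸] {f : 𝕜 → Matrix l m 𝔸} {g : 𝕜 → Matrix m n 𝔸}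
    {f' : Matrix l m 𝔸} {g' : Matrix m n 𝔸}
    (hf : HasDerivWithinAt f f' s x) (hg : HasDerivWithinAt g g' s x) :
    HasDerivWithinAt (fun t => f t * g t) (f' * g x + f x * g') s x := by
  refine hasDerivWithinAt_pi.2 fun i => hasDerivWithinAt_pi.2 fun j => ?_
  simp only [Matrix.add_apply, mul_apply, ← Finset.sum_add_distrib]
  exact .fun_sum fun k _ => (hf.matrix_apply i k).fun_mul (hg.matrix_apply k j)

theorem HasDerivWithinAt.conjTranspose [Fintype m] [Fintype n] [StarRing 𝕜] [TrivialStar 𝕜]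
    {E : Type*} [NormedAddCommGroup E] [NormedSpace 𝕜 E] [StarAddMonoid E] [StarModule 𝕜 E]
    [ContinuousStar E] {f : 𝕜 → Matrix m n E} {f' : Matrix m n E}
    (hf : HasDerivWithinAt f f' s x) :
    HasDerivWithinAt (fun t => (f t)ᴴ) f'ᴴ s x :=
  hasDerivWithinAt_pi.2 fun i => hasDerivWithinAt_pi.2 fun j => (hf.matrix_apply j i).star

end MatrixCalculus

theorem Convex.matrix_mul_const_of_hasDerivWithinAt {n 𝔸 : Type*} [Fintype n]
    [NormedCommRing 𝔸] [NormedAlgebra ℝ 𝔸] {W Y M : ℝ → Matrix n n 𝔸} {s : Set ℝ}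
    (hs : Convex ℝ s)
    (hW : ∀ t ∈ s, HasDerivWithinAt W (-(W t * M t)) s t)
    (hY : ∀ t ∈ s, HasDerivWithinAt Y (M t * Y t) s t) {a b : ℝ} (ha : a ∈ s)
    (hb : b ∈ s) :
    W b * Y b = W a * Y a := by
  have hWY : ∀ t ∈ s, HasDerivWithinAt (fun t => W t * Y t) 0 s t := fun t ht => by
    simpa [Matrix.mul_assoc] using (hW t ht).matrix_mul (hY t ht)
  have := hs.norm_image_sub_le_of_norm_hasDerivWithin_le (C := 0) hWY (by simp) ha hb
  simpa [sub_eq_zero] using this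

theorem conjTranspose_connection_conj {n : ℕ} {X₁ X₂ : Matrix (Fin n) (Fin n) ℂ}
    (hX₁ : X₁ᴴ = -X₁) (hX₂ : X₂ᴴ = -X₂) (z : ℂ) :
    ((starRingEnd ℂ z - 1)⁻¹ • X₁ + (starRingEnd ℂ z + 1)⁻¹ • X₂)ᴴ =
      -((z - 1)⁻¹ • X₁ + (z + 1)⁻¹ • X₂) := by
  simp [hX₁, hX₂, add_comm]

theorem conjugate_path_holonomy_general (n : ℕ)
    (X₁ X₂ : Matrix (Fin n) (Fin n) ℂ) (hX₁ : X₁ᴴ = -X₁) (hX₂ : X₂ᴴ = -X₂)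
    (γ γ' : ℝ → ℂ)
    (Y Z : ℝ → Matrix (Fin n) (Fin n) ℂ)
    (hY : IsParallelTransport X₁ X₂ γ γ' Y)
    (hZ : IsParallelTransport X₁ X₂
      (fun s => starRingEnd ℂ (γ s)) (fun s => starRingEnd ℂ (γ' s)) Z) :
    ∀ s ∈ Set.Icc (0 : ℝ) 1, Z s = ((Y s)ᴴ)⁻¹ := by
  intro s hs
  set M : ℝ → Matrix (Fin n) (Fin n) ℂ :=
    fun t => γ' t • ((γ t - 1)⁻¹ • X₁ + (γ t + 1)⁻¹ • X₂)
  have hY' (t) (ht : t ∈ Set.Icc (0 : ℝ) 1) :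
      HasDerivWithinAt Y (M t * Y t) (Set.Icc 0 1) t := by
    simpa only [M, smul_mul_assoc] using hY.2 t ht
  have hZ' (t) (ht : t ∈ Set.Icc (0 : ℝ) 1) :
      HasDerivWithinAt (fun t => (Z t)ᴴ) (-((Z t)ᴴ * M t)) (Set.Icc 0 1) t := by
    convert (hZ.2 t ht).conjTranspose using 1
    rw [conjTranspose_smul, conjTranspose_mul, conjTranspose_connection_conj hX₁ hX₂]
    simp only [M, Complex.star_def, Complex.conj_conj, Matrix.mul_neg, Matrix.mul_smul,
      smul_neg]
  have hunitary : (Z s)ᴴ * Y s = 1 := by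
    simpa [hY.1, hZ.1] using
      (convex_Icc 0 1).matrix_mul_const_of_hasDerivWithinAt hZ' hY'
        (Set.left_mem_Icc.2 zero_le_one) hs
  exact (inv_eq_right_inv (by simpa using congrArg conjTranspose hunitary)).symm

/-- The reality condition `conj (A z) = - A (conj z)` at the level of holonomies: for
skew-Hermitian `X₁`, `X₂`, the parallel transport `Z` along the complex conjugate
path equals the inverse conjugate transpose of the parallel transport `Y` along the
original path. -/
theorem conjugate_path_holonomy (n : ℕ) (hn : 1 ≤ n)
    (X₁ X₂ : Matrix (Fin n) (Fin n) ℂ) (hX₁ : X₁ᴴ = -X₁) (hX₂ : X₂ᴴ = -X₂)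
    (γ γ' : ℝ → ℂ)
    (hγ : ∀ s ∈ Set.Icc (0 : ℝ) 1, HasDerivWithinAt γ (γ' s) (Set.Icc (0 : ℝ) 1) s)
    (hγ' : ContinuousOn γ' (Set.Icc (0 : ℝ) 1))
    (havoid : ∀ s ∈ Set.Icc (0 : ℝ) 1, γ s ≠ 1 ∧ γ s ≠ -1)
    (Y Z : ℝ → Matrix (Fin n) (Fin n) ℂ)
    (hY : IsParallelTransport X₁ X₂ γ γ' Y)
    (hZ : IsParallelTransport X₁ X₂
      (fun s => starRingEnd ℂ (γ s)) (fun s => starRingEnd ℂ (γ' s)) Z) :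
    ∀ s ∈ Set.Icc (0 : ℝ) 1, Z s = ((Y s)ᴴ)⁻¹ :=
  conjugate_path_holonomy_general n X₁ X₂ hX₁ hX₂ γ γ' Y Z hY hZ
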